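/- arXiv:math/0203233 — 8 statements merged into one kernel-verified Lean document; each statement's English description precedes it below -/
import Mathlib

section
/- Let X be a monoid with identity 1, d a left translation-invariant distance function on X, and h : X → ℝ^n a distance equality preserving map whose image is not contained in any affine hyperplane of ℝ^n. Then there exists a unique monoid homomorphism f from X to the group of isometries of ℝ^n such that h(x) = f(x)(h(1)) for all x in X. -/
open scoped RealInnerProductSpace

/-- A map between indexed families preserving all inner products, with the source family
spanning, extends to a linear isometry equivalence (finite dimensions). -/
lemma dep_exists_linearIsometryEquiv {E : Type*} [NormedAddCommGroup E]
    [InnerProductSpace ℝ E] [FiniteDimensional ℝ E] {ι : Type*} (v w : ι → E)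
    (hspan : Submodule.span ℝ (Set.range v) = ⊤)
    (hinner : ∀ i j, ⟪w i, w j⟫ = ⟪v i, v j⟫) :
    ∃ L : E ≃ₗᵢ[ℝ] E, ∀ i, L (v i) = w i := by
  obtain ⟨b, hb_sub, hb_span, hb_li⟩ := exists_linearIndependent ℝ (Set.range v)
  have hb_top : ⊤ ≤ Submodule.span ℝ (Set.range ((↑) : b → E)) := by
    rw [Subtype.range_coe, hb_span, hspan]
  let B : Module.Basis b ℝ E := Module.Basis.mk hb_li hb_top
  have hB : ∀ e : b, B e = (e : E) := fun e => Module.Basis.mk_apply hb_li hb_top e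
  have hidx : ∀ e : b, ∃ i, v i = (e : E) := fun e => hb_sub e.2
  choose idx hidxv using hidx
  let L₀ : E →ₗ[ℝ] E := B.constr ℝ (fun e => w (idx e))
  have hL₀B : ∀ e : b, L₀ (B e) = w (idx e) := fun e => B.constr_basis ℝ _ e
  -- L₀ preserves inner products
  have hL₀inner : ∀ u u' : E, ⟪L₀ u, L₀ u'⟫ = ⟪u, u'⟫ := by
    have : (innerₗ E).compl₁₂ L₀ L₀ = innerₗ E := by
      apply LinearMap.ext_basis B B
      intro e e'
      simp only [LinearMap.compl₁₂_apply, innerₗ_apply_apply]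
      rw [hL₀B, hL₀B, hinner, hidxv, hidxv, hB, hB]
    intro u u'
    have h2 := LinearMap.congr_fun₂ this u u'
    simpa using h2
  have hnorm : ∀ u : E, ‖L₀ u‖ = ‖u‖ := by
    intro u
    have h1 := hL₀inner u u
    rw [real_inner_self_eq_norm_sq, real_inner_self_eq_norm_sq] at h1
    nlinarith [norm_nonneg (L₀ u), norm_nonneg u]
  let Li : E →ₗᵢ[ℝ] E := ⟨L₀, hnorm⟩
  have hsurj : Function.Surjective Li := by
    have hinj : Function.Injective L₀ := Li.injective
    exact LinearMap.injective_iff_surjective.mp hinj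
  let L : E ≃ₗᵢ[ℝ] E := LinearIsometryEquiv.ofSurjective Li hsurj
  have hLapp : ∀ u : E, L u = L₀ u := fun u => rfl
  refine ⟨L, fun i => ?_⟩
  -- show L (v i) = w i by testing inner products against the image basis
  have hkey : ∀ e : b, ⟪L (v i) - w i, L₀ (B e)⟫ = 0 := by
    intro e
    rw [inner_sub_left]
    have h1 : ⟪L (v i), L₀ (B e)⟫ = ⟪v i, B e⟫ := by
      rw [hLapp]; exact hL₀inner _ _
    have h2 : ⟪w i, L₀ (B e)⟫ = ⟪w i, w (idx e)⟫ := by rw [hL₀B]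
    rw [h1, h2, hinner, hidxv, hB]
    ring
  set z : E := L (v i) - w i with hz
  have hz0 : z = 0 := by
    let B' : Module.Basis b ℝ E := B.map L.toLinearEquiv
    have hφ : (innerₗ E z : E →ₗ[ℝ] ℝ) = 0 := by
      apply B'.ext
      intro e
      have : B' e = L₀ (B e) := rfl
      simp only [this, LinearMap.zero_apply, innerₗ_apply_apply]
      exact hkey e
    have := congrFun (congrArg (fun f : E →ₗ[ℝ] ℝ => (f : E → ℝ)) hφ) z
    simp only [innerₗ_apply_apply, LinearMap.zero_apply] at this
    exact inner_self_eq_zero.mp this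
  have := sub_eq_zero.mp (hz ▸ hz0)
  exact this

/-- Two isometry equivalences of a real inner product space agreeing on a set whose affine
span is everything are equal. -/
lemma dep_isometryEquiv_ext {E : Type*} [NormedAddCommGroup E] [InnerProductSpace ℝ E]
    {S : Set E} (hS : affineSpan ℝ S = ⊤) {g₁ g₂ : E ≃ᵢ E} (hg : ∀ p ∈ S, g₁ p = g₂ p) :
    g₁ = g₂ := by
  obtain ⟨p₀, hp₀⟩ := AffineSubspace.nonempty_of_affineSpan_eq_top ℝ E E hS
  have hvspan : Submodule.span ℝ ((fun p => p - p₀) '' S) = ⊤ := by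
    have h1 : vectorSpan ℝ S = ⊤ := AffineSubspace.vectorSpan_eq_top_of_affineSpan_eq_top ℝ E E hS
    rw [vectorSpan_eq_span_vsub_set_right ℝ hp₀] at h1
    simpa [vsub_eq_sub] using h1
  have key : ∀ (g : E ≃ᵢ E) (p : E),
      g p = g.toRealAffineIsometryEquiv.linearIsometryEquiv (p - p₀) + g p₀ := by
    intro g p
    have h1 : g ((p - p₀) +ᵥ p₀) =
        g.toRealAffineIsometryEquiv.linearIsometryEquiv (p - p₀) +ᵥ
          g.toRealAffineIsometryEquiv p₀ := by
      conv_lhs => rw [← IsometryEquiv.coeFn_toRealAffineIsometryEquiv g]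
      exact g.toRealAffineIsometryEquiv.map_vadd p₀ (p - p₀)
    rw [IsometryEquiv.coeFn_toRealAffineIsometryEquiv] at h1
    simpa [vadd_eq_add, sub_add_cancel, add_comm] using h1
  have hlin : ∀ u : E, g₁.toRealAffineIsometryEquiv.linearIsometryEquiv u =
      g₂.toRealAffineIsometryEquiv.linearIsometryEquiv u := by
    have hmem : ∀ u ∈ Submodule.span ℝ ((fun p => p - p₀) '' S),
        g₁.toRealAffineIsometryEquiv.linearIsometryEquiv u =
          g₂.toRealAffineIsometryEquiv.linearIsometryEquiv u := by
      intro u hu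
      induction hu using Submodule.span_induction with
      | mem u hu =>
        obtain ⟨s, hs, rfl⟩ := hu
        have h1 := key g₁ s
        have h2 := key g₂ s
        rw [hg s hs] at h1
        have h3 := h1.symm.trans h2
        rw [hg p₀ hp₀] at h3
        exact add_right_cancel h3
      | zero => simp
      | add u v _ _ h₁ h₂ => simp [map_add, h₁, h₂]
      | smul a u _ h₁ => simp [map_smul, h₁]
    intro u
    exact hmem u (by rw [hvspan]; trivial)
  ext p
  rw [key g₁ p, key g₂ p, hg p₀ hp₀, hlin (p - p₀)]

theorem dep_unique_monoid_hom {X M : Type*} [Monoid X] (n : ℕ) (d : X × X → M)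
    (hd : ∀ x y z : X, d (z * x, z * y) = d (x, y))
    (h : X → EuclideanSpace ℝ (Fin n))
    (hh : ∀ x y z w : X, d (x, y) = d (z, w) → ‖h x - h y‖ = ‖h z - h w‖)
    (hspan : affineSpan ℝ (Set.range h) = ⊤) :
    ∃! f : X →* (EuclideanSpace ℝ (Fin n) ≃ᵢ EuclideanSpace ℝ (Fin n)),
      ∀ x : X, h x = f x (h 1) := by
  -- norm preservation under left translation
  have hnrm : ∀ x y z : X, ‖h (x * y) - h (x * z)‖ = ‖h y - h z‖ := by
    intro x y z
    exact hh (x * y) (x * z) y z (hd y z x)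
  have hnrm1 : ∀ x y : X, ‖h (x * y) - h x‖ = ‖h y - h 1‖ := by
    intro x y
    have := hnrm x y 1
    rwa [mul_one] at this
  -- inner product preservation
  have polar : ∀ u u' : (EuclideanSpace ℝ (Fin n)), ⟪u, u'⟫ = (‖u‖ ^ 2 + ‖u'‖ ^ 2 - ‖u - u'‖ ^ 2) / 2 := by
    intro u u'
    have := norm_sub_sq_real u u'
    linarith
  have hin : ∀ x y z : X,
      ⟪h (x * y) - h x, h (x * z) - h x⟫ = ⟪h y - h 1, h z - h 1⟫ := by
    intro x y z
    rw [polar, polar]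
    have e1 := hnrm1 x y
    have e2 := hnrm1 x z
    have e3 : ‖h (x * y) - h x - (h (x * z) - h x)‖ = ‖h y - h 1 - (h z - h 1)‖ := by
      have : ∀ a b c : (EuclideanSpace ℝ (Fin n)), a - c - (b - c) = a - b := by intro a b c; abel
      rw [this, this]
      exact hnrm x y z
    rw [e1, e2, e3]
  -- spanning of difference vectors
  have hvspan : Submodule.span ℝ (Set.range fun y => h y - h 1) = ⊤ := by
    have h1 : vectorSpan ℝ (Set.range h) = ⊤ :=
      AffineSubspace.vectorSpan_eq_top_of_affineSpan_eq_top ℝ _ _ hspan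
    rw [vectorSpan_eq_span_vsub_set_right ℝ (Set.mem_range_self 1)] at h1
    have himg : ((· -ᵥ h 1) '' Set.range h) = Set.range fun y => h y - h 1 := by
      ext u
      constructor
      · rintro ⟨p, ⟨y, rfl⟩, rfl⟩; exact ⟨y, by simp [vsub_eq_sub]⟩
      · rintro ⟨y, rfl⟩; exact ⟨h y, ⟨y, rfl⟩, by simp [vsub_eq_sub]⟩
    rwa [himg] at h1
  -- construct the linear isometries
  have hex : ∀ x : X, ∃ L : (EuclideanSpace ℝ (Fin n)) ≃ₗᵢ[ℝ] (EuclideanSpace ℝ (Fin n)), ∀ y : X, L (h y - h 1) = h (x * y) - h x := by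
    intro x
    exact dep_exists_linearIsometryEquiv (fun y => h y - h 1)
      (fun y => h (x * y) - h x) hvspan (fun y z => hin x y z)
  choose L hL using hex
  -- assemble isometry equivalences
  let F : X → ((EuclideanSpace ℝ (Fin n)) ≃ᵢ (EuclideanSpace ℝ (Fin n))) := fun x =>
    (L x).toIsometryEquiv.trans (IsometryEquiv.addLeft (h x - L x (h 1)))
  have hF : ∀ x y : X, F x (h y) = h (x * y) := by
    intro x y
    show h x - L x (h 1) + (L x) (h y) = h (x * y)
    have hy : (L x) (h y) = L x (h y - h 1) + L x (h 1) := by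
      rw [← map_add]
      congr 1
      abel
    rw [hy, hL x y]
    abel
  have hFuniq : ∀ (g : (EuclideanSpace ℝ (Fin n)) ≃ᵢ (EuclideanSpace ℝ (Fin n))) (x : X), (∀ y : X, g (h y) = h (x * y)) → g = F x := by
    intro g x hg
    apply dep_isometryEquiv_ext hspan
    rintro p ⟨y, rfl⟩
    rw [hg y, hF x y]
  -- the monoid hom
  have hFone : F 1 = IsometryEquiv.refl (EuclideanSpace ℝ (Fin n)) := by
    symm
    apply dep_isometryEquiv_ext hspan
    rintro p ⟨y, rfl⟩
    show h y = F 1 (h y)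
    rw [hF 1 y, one_mul]
  have hFmul : ∀ x y : X, F (x * y) = F x * F y := by
    intro x y
    symm
    apply dep_isometryEquiv_ext hspan
    rintro p ⟨z, rfl⟩
    show (F x) ((F y) (h z)) = F (x * y) (h z)
    rw [hF y z, hF x (y * z), hF (x * y) z, mul_assoc]
  refine ⟨{ toFun := F, map_one' := hFone, map_mul' := hFmul }, ?_, ?_⟩
  · intro x
    show h x = F x (h 1)
    rw [hF x 1, mul_one]
  · intro g hg
    have hgh : ∀ x y : X, g x (h y) = h (x * y) := by
      intro x y
      have h1 : g x (g y (h 1)) = g (x * y) (h 1) := by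
        rw [map_mul]
        rfl
      rw [← hg y] at h1
      rw [h1, ← hg (x * y)]
    refine MonoidHom.ext fun x => ?_
    show g x = F x
    exact hFuniq (g x) x (hgh x)
end

section
/- Let X be a monoid, d a left translation-invariant distance function on X, and h : X → ℝ^n a distance equality preserving map (with image possibly contained in a hyperplane). Then there exists a monoid homomorphism f from X to the group of isometries of ℝ^n such that h(x) = f(x)(h(1)) for all x in X. -/
open Submodule Finsupp LinearMap
open scoped InnerProductSpace

theorem gram_lin {ι V : Type*} [NormedAddCommGroup V] [InnerProductSpace ℝ V]
    (v w : ι → V) (hg : ∀ i j, ⟪v i, v j⟫_ℝ = ⟪w i, w j⟫_ℝ) :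
    ∃ L : Submodule.span ℝ (Set.range v) →ₗᵢ[ℝ] V,
      ∀ i, L ⟨v i, Submodule.subset_span ⟨i, rfl⟩⟩ = w i := by
  set T := Finsupp.linearCombination ℝ v with hT
  set T' := Finsupp.linearCombination ℝ w with hT'
  have key : ∀ c c' : ι →₀ ℝ, ⟪T c, T c'⟫_ℝ = ⟪T' c, T' c'⟫_ℝ := by
    intro c c'
    simp only [hT, hT', Finsupp.linearCombination_apply, Finsupp.sum, sum_inner, inner_sum,
      real_inner_smul_left, real_inner_smul_right, hg]
  have hker : ker T ≤ ker T' := by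
    intro c hc
    rw [mem_ker] at hc ⊢
    have : ⟪T' c, T' c⟫_ℝ = 0 := by rw [← key, hc, inner_zero_left]
    exact inner_self_eq_zero.mp this
  have hnorm : ∀ c : ι →₀ ℝ, ‖T' c‖ = ‖T c‖ := by
    intro c
    rw [norm_eq_sqrt_real_inner, norm_eq_sqrt_real_inner, key]
  let q : ((ι →₀ ℝ) ⧸ ker T) →ₗ[ℝ] V := Submodule.liftQ _ T' hker
  let e := LinearMap.quotKerEquivRange T
  have hspan : Submodule.span ℝ (Set.range v) = LinearMap.range T :=
    (Finsupp.range_linearCombination (R := ℝ) (v := v)).symm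
  let L0 : Submodule.span ℝ (Set.range v) →ₗ[ℝ] V :=
    q ∘ₗ (e.symm : LinearMap.range T →ₗ[ℝ] _) ∘ₗ (LinearEquiv.ofEq _ _ hspan : _ →ₗ[ℝ] _)
  have hL0 : ∀ (c : ι →₀ ℝ) (hc : T c ∈ Submodule.span ℝ (Set.range v)),
      L0 ⟨T c, hc⟩ = T' c := by
    intro c hc
    have h1 : LinearEquiv.ofEq _ _ hspan (⟨T c, hc⟩ : Submodule.span ℝ (Set.range v)) =
        (⟨T c, LinearMap.mem_range_self T c⟩ : LinearMap.range T) := rfl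
    have h2 : e.symm (⟨T c, LinearMap.mem_range_self T c⟩ : LinearMap.range T) = (ker T).mkQ c :=
      T.quotKerEquivRange_symm_apply_image c (LinearMap.mem_range_self T c)
    simp only [L0, LinearMap.comp_apply, LinearEquiv.coe_coe]
    rw [h1, h2, Submodule.mkQ_apply]
    exact Submodule.liftQ_apply _ T' c
  have hmem : ∀ u : Submodule.span ℝ (Set.range v), ∃ c : ι →₀ ℝ,
      T c = (u : V) := by
    rintro ⟨u, hu⟩
    rw [hspan] at hu
    exact hu
  refine ⟨⟨L0, ?_⟩, ?_⟩
  · intro u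
    obtain ⟨c, hc⟩ := hmem u
    have hu : u = ⟨T c, by rw [hc]; exact u.2⟩ := by ext; exact hc.symm
    rw [hu, hL0, hnorm]
    simp [hc]
  · intro i
    have : v i = T (Finsupp.single i 1) := by simp [hT]
    have h2 : (⟨v i, Submodule.subset_span ⟨i, rfl⟩⟩ : Submodule.span ℝ (Set.range v)) =
        ⟨T (Finsupp.single i 1), by rw [← this]; exact Submodule.subset_span ⟨i, rfl⟩⟩ := by
      ext; exact this
    show L0 _ = w i
    rw [h2, hL0]
    simp [hT']

set_option maxHeartbeats 2000000 in
theorem dep_exists_monoid_hom {X M : Type*} [Monoid X] (n : ℕ) (d : X × X → M)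
    (hd : ∀ x y z : X, d (z * x, z * y) = d (x, y))
    (h : X → EuclideanSpace ℝ (Fin n))
    (hh : ∀ x y z w : X, d (x, y) = d (z, w) → ‖h x - h y‖ = ‖h z - h w‖) :
    ∃ f : X →* (EuclideanSpace ℝ (Fin n) ≃ᵢ EuclideanSpace ℝ (Fin n)),
      ∀ x : X, h x = f x (h 1) := by
  classical
  -- basic norm invariance
  have key : ∀ z x y : X, ‖h (z * x) - h (z * y)‖ = ‖h x - h y‖ := fun z x y =>
    hh _ _ _ _ (hd x y z)
  set k : X → (EuclideanSpace ℝ (Fin n)) := fun x => h x - h 1 with hk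
  set m : X → X → (EuclideanSpace ℝ (Fin n)) := fun z x => h (z * x) - h z with hm
  have hnorm1 : ∀ z x, ‖m z x‖ = ‖k x‖ := by
    intro z x
    have := key z x 1
    simpa [hm, hk, mul_one] using this
  have hnorm2 : ∀ z x y, ‖m z x - m z y‖ = ‖k x - k y‖ := by
    intro z x y
    have := key z x y
    simpa [hm, hk, sub_sub_sub_cancel_right] using this
  have hgram : ∀ z x y, ⟪k x, k y⟫_ℝ = ⟪m z x, m z y⟫_ℝ := by
    intro z x y
    rw [real_inner_eq_norm_mul_self_add_norm_mul_self_sub_norm_sub_mul_self_div_two,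
      real_inner_eq_norm_mul_self_add_norm_mul_self_sub_norm_sub_mul_self_div_two,
      hnorm1, hnorm1, hnorm2]
  set W := Submodule.span ℝ (Set.range k) with hW
  have hkW : ∀ x, k x ∈ W := fun x => Submodule.subset_span ⟨x, rfl⟩
  have hmW : ∀ z x, m z x ∈ W := by
    intro z x
    have : m z x = k (z * x) - k z := by simp [hm, hk]
    rw [this]
    exact sub_mem (hkW _) (hkW _)
  -- linear isometries on W
  have hLz : ∀ z : X, ∃ L : W →ₗᵢ[ℝ] (EuclideanSpace ℝ (Fin n)), ∀ x, L ⟨k x, hkW x⟩ = m z x := fun z =>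
    gram_lin k (m z) (hgram z)
  choose L hL using hLz
  have hLW : ∀ (z : X) (u : W), L z u ∈ W := by
    intro z u
    obtain ⟨u, hu⟩ := u
    induction hu using Submodule.span_induction with
    | mem a ha =>
      obtain ⟨x, rfl⟩ := ha
      rw [hL]
      exact hmW z x
    | zero =>
      have : (⟨(0 : EuclideanSpace ℝ (Fin n)), zero_mem W⟩ : W) = 0 := rfl
      rw [this, map_zero]
      exact zero_mem W
    | add a b ha hb iha ihb =>
      have : (⟨a + b, Submodule.add_mem W ha hb⟩ : W) = ⟨a, ha⟩ + ⟨b, hb⟩ := rfl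
      rw [this, map_add]
      exact add_mem iha ihb
    | smul c a ha iha =>
      have : (⟨c • a, Submodule.smul_mem W c ha⟩ : W) = c • ⟨a, ha⟩ := rfl
      rw [this, map_smul]
      exact Submodule.smul_mem W c iha
  set L' : X → (W →ₗᵢ[ℝ] W) := fun z =>
    ⟨LinearMap.codRestrict W (L z).toLinearMap (hLW z), fun u => by
        simpa using (L z).norm_map u⟩ with hL'
  have hL'app : ∀ z x, (L' z ⟨k x, hkW x⟩ : (EuclideanSpace ℝ (Fin n))) = m z x := by
    intro z x; exact hL z x
  -- composition and identity on W
  have hL'mul : ∀ z w u, L' z (L' w u) = L' (z * w) u := by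
    intro z w u
    obtain ⟨u, hu⟩ := u
    induction hu using Submodule.span_induction with
    | mem a ha =>
      obtain ⟨x, rfl⟩ := ha
      apply Subtype.ext
      have h1 : L' w ⟨k x, hkW x⟩ = ⟨k (w * x), hkW _⟩ - ⟨k w, hkW _⟩ := by
        apply Subtype.ext
        rw [hL'app]
        simp [hm, hk]
      rw [h1, map_sub]
      have h2 : (⟨k (w * x), hkW _⟩ : W) = ⟨k (w * x), hkW _⟩ := rfl
      push_cast
      rw [show ((L' z ⟨k (w*x), hkW _⟩ : W) : (EuclideanSpace ℝ (Fin n))) = m z (w * x) from hL'app z (w*x),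
        show ((L' z ⟨k w, hkW _⟩ : W) : (EuclideanSpace ℝ (Fin n))) = m z w from hL'app z w,
        show ((L' (z*w) ⟨k x, hkW _⟩ : W) : (EuclideanSpace ℝ (Fin n))) = m (z*w) x from hL'app (z*w) x]
      simp [hm, mul_assoc]
    | zero =>
      have : (⟨(0 : (EuclideanSpace ℝ (Fin n))), zero_mem W⟩ : W) = 0 := rfl
      rw [this, map_zero, map_zero, map_zero]
    | add a b ha hb iha ihb =>
      have : (⟨a + b, Submodule.add_mem W ha hb⟩ : W) = ⟨a, ha⟩ + ⟨b, hb⟩ := rfl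
      rw [this, map_add, map_add, map_add, iha, ihb]
    | smul c a ha iha =>
      have : (⟨c • a, Submodule.smul_mem W c ha⟩ : W) = c • ⟨a, ha⟩ := rfl
      rw [this, map_smul, map_smul, map_smul, iha]
  have hL'one : ∀ u, L' 1 u = u := by
    intro u
    obtain ⟨u, hu⟩ := u
    induction hu using Submodule.span_induction with
    | mem a ha =>
      obtain ⟨x, rfl⟩ := ha
      apply Subtype.ext
      rw [hL'app]
      simp [hm, hk]
    | zero =>
      have : (⟨(0 : (EuclideanSpace ℝ (Fin n))), zero_mem W⟩ : W) = 0 := rfl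
      rw [this, map_zero]
    | add a b ha hb iha ihb =>
      have : (⟨a + b, Submodule.add_mem W ha hb⟩ : W) = ⟨a, ha⟩ + ⟨b, hb⟩ := rfl
      rw [this, map_add, iha, ihb]
    | smul c a ha iha =>
      have : (⟨c • a, Submodule.smul_mem W c ha⟩ : W) = c • ⟨a, ha⟩ := rfl
      rw [this, map_smul, iha]
  -- upgrade to equivs
  set G : X → (W ≃ₗᵢ[ℝ] W) := fun z => (L' z).toLinearIsometryEquiv rfl with hG
  have hGapp : ∀ z (u : W), G z u = L' z u := fun z u =>
    (L' z).toLinearIsometryEquiv_apply rfl u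
  -- extension to all of (EuclideanSpace ℝ (Fin n))
  set P := orthogonalProjection W with hP
  set E : X → (EuclideanSpace ℝ (Fin n)) → (EuclideanSpace ℝ (Fin n)) := fun z q => (G z (P q) : (EuclideanSpace ℝ (Fin n))) + (q - (P q : (EuclideanSpace ℝ (Fin n)))) with hE
  have hEsub : ∀ z a b, E z a - E z b = E z (a - b) := by
    intro z a b
    simp only [hE, map_sub]
    push_cast
    abel
  have hEadd : ∀ z a b, E z (a + b) = E z a + E z b := by
    intro z a b
    have := hEsub z (a + b) b
    simp only [add_sub_cancel_right] at this
    rw [← this]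
    abel
  have hEzero : ∀ z, E z 0 = 0 := by
    intro z
    have := hEsub z 0 0
    simp only [sub_zero] at this
    rw [← this]
    abel
  have hEnorm : ∀ z q, ‖E z q‖ = ‖q‖ := by
    intro z q
    have horth : ⟪((G z (P q) : W) : EuclideanSpace ℝ (Fin n)), q - (P q : EuclideanSpace ℝ (Fin n))⟫_ℝ = 0 :=
      Submodule.inner_right_of_mem_orthogonal (G z (P q)).2
        (Submodule.sub_starProjection_mem_orthogonal (K := W) q)
    have horth' : ⟪((P q : W) : EuclideanSpace ℝ (Fin n)), q - (P q : EuclideanSpace ℝ (Fin n))⟫_ℝ = 0 :=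
      Submodule.inner_right_of_mem_orthogonal (P q).2
        (Submodule.sub_starProjection_mem_orthogonal (K := W) q)
    have hq : q = (P q : EuclideanSpace ℝ (Fin n)) + (q - (P q : EuclideanSpace ℝ (Fin n))) := by abel
    have e1 : ‖E z q‖ ^ 2 = ‖q‖ ^ 2 := by
      conv_rhs => rw [hq]
      rw [hE]
      simp only
      rw [norm_add_sq_real, norm_add_sq_real, horth, horth']
      have : ‖((G z (P q) : W) : EuclideanSpace ℝ (Fin n))‖ = ‖((P q : W) : EuclideanSpace ℝ (Fin n))‖ := by
        rw [Submodule.norm_coe, Submodule.norm_coe, (G z).norm_map]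
      rw [this]
    nlinarith [norm_nonneg (E z q), norm_nonneg q, e1]
  have hEW : ∀ z (u : W), E z (u : EuclideanSpace ℝ (Fin n)) = (L' z u : EuclideanSpace ℝ (Fin n)) := by
    intro z u
    have hPu : P (u : EuclideanSpace ℝ (Fin n)) = u := orthogonalProjection_mem_subspace_eq_self u
    rw [hE]
    simp only [hPu, hGapp]
    simp
  have hPgen : ∀ (u : W) (q : EuclideanSpace ℝ (Fin n)),
      P ((u : EuclideanSpace ℝ (Fin n)) + (q - (P q : EuclideanSpace ℝ (Fin n)))) = u := by
    intro u q
    have h0 : P (q - (P q : EuclideanSpace ℝ (Fin n))) = 0 :=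
      orthogonalProjection_mem_subspace_orthogonalComplement_eq_zero
        (Submodule.sub_starProjection_mem_orthogonal (K := W) q)
    rw [map_add, h0, add_zero, orthogonalProjection_mem_subspace_eq_self]
  have hEapp : ∀ z (u : W) (q : EuclideanSpace ℝ (Fin n)),
      E z ((u : EuclideanSpace ℝ (Fin n)) + (q - (P q : EuclideanSpace ℝ (Fin n)))) =
        ((G z u : W) : EuclideanSpace ℝ (Fin n)) + (q - (P q : EuclideanSpace ℝ (Fin n))) := by
    intro z u q
    rw [hE]
    simp only [hPgen]
    abel
  have hEmul : ∀ z w q, E z (E w q) = E (z * w) q := by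
    intro z w q
    have h1 : E w q = ((G w (P q) : W) : EuclideanSpace ℝ (Fin n)) +
        (q - (P q : EuclideanSpace ℝ (Fin n))) := by rw [hE]
    rw [h1, hEapp]
    have : G z (G w (P q)) = G (z * w) (P q) := by
      rw [hGapp, hGapp, hGapp, hL'mul]
    rw [this, hE]
  have hEone : ∀ q, E 1 q = q := by
    intro q
    rw [hE]
    simp only [hGapp, hL'one]
    abel
  -- explicit inverse
  set E' : X → EuclideanSpace ℝ (Fin n) → EuclideanSpace ℝ (Fin n) := fun z q =>
    (((G z).symm (P q) : W) : EuclideanSpace ℝ (Fin n)) + (q - (P q : EuclideanSpace ℝ (Fin n)))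
    with hE'
  have hE'app : ∀ z (u : W) (q : EuclideanSpace ℝ (Fin n)),
      E' z ((u : EuclideanSpace ℝ (Fin n)) + (q - (P q : EuclideanSpace ℝ (Fin n)))) =
        (((G z).symm u : W) : EuclideanSpace ℝ (Fin n)) + (q - (P q : EuclideanSpace ℝ (Fin n))) := by
    intro z u q
    rw [hE']
    simp only [hPgen]
    abel
  have hEE' : ∀ z q, E z (E' z q) = q := by
    intro z q
    rw [hE', hEapp]
    simp
  have hE'E : ∀ z q, E' z (E z q) = q := by
    intro z q
    have h1 : E z q = ((G z (P q) : W) : EuclideanSpace ℝ (Fin n)) +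
        (q - (P q : EuclideanSpace ℝ (Fin n))) := by rw [hE]
    rw [h1, hE'app]
    simp
  -- the isometry equivs
  set Φ : X → (EuclideanSpace ℝ (Fin n) ≃ᵢ EuclideanSpace ℝ (Fin n)) := fun z =>
    { toFun := fun p => E z (p - h 1) + h z
      invFun := fun p => E' z (p - h z) + h 1
      left_inv := fun p => by simp only [add_sub_cancel_right, hE'E]; abel
      right_inv := fun p => by simp only [add_sub_cancel_right, hEE']; abel
      isometry_toFun := by
        apply Isometry.of_dist_eq
        intro a b
        rw [dist_eq_norm, dist_eq_norm]
        have : E z (a - h 1) + h z - (E z (b - h 1) + h z) = E z (a - b) := by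
          have := hEsub z (a - h 1) (b - h 1)
          rw [show a - h 1 - (b - h 1) = a - b by abel] at this
          rw [← this]
          abel
        rw [this, hEnorm] } with hΦ
  have hΦapp : ∀ z p, Φ z p = E z (p - h 1) + h z := fun z p => rfl
  have hΦmul : ∀ z w, Φ (z * w) = Φ z * Φ w := by
    intro z w
    apply IsometryEquiv.ext
    intro p
    rw [IsometryEquiv.mul_apply, hΦapp, hΦapp, hΦapp]
    have h1 : E w (p - h 1) + h w - h 1 = E w (p - h 1) + k w := by
      simp only [hk]
      abel
    rw [h1, hEadd, hEmul]
    have h2 : E z (k w) = m z w := by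
      have := hEW z ⟨k w, hkW w⟩
      rw [this, hL'app]
    rw [h2]
    simp only [hm]
    abel
  refine ⟨MonoidHom.mk' (fun z => Φ z) hΦmul, ?_⟩
  intro x
  show h x = Φ x (h 1)
  rw [hΦapp]
  simp only [sub_self, hEzero]
  abel
end

section
/- Let x_0, …, x_n be affinely independent points of ℝ^n and g : ℝ^n → ℝ^n a map such that for every a ∈ ℝ^n, ‖g(a) - g(x_i)‖ = ‖a - x_i‖ for all i, and such that ‖g(x_i) - g(x_j)‖ = ‖x_i - x_j‖ for all i, j. Then g is an isometry of ℝ^n. -/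
open RealInnerProductSpace

private lemma inner_eq_of_norms {V : Type*} [NormedAddCommGroup V] [InnerProductSpace ℝ V]
    {p q p' q' : V} (hp : ‖p‖ = ‖p'‖) (hq : ‖q‖ = ‖q'‖) (hpq : ‖p - q‖ = ‖p' - q'‖) :
    ⟪p, q⟫ = ⟪p', q'⟫ := by
  have e1 := norm_sub_sq_real p q
  have e2 := norm_sub_sq_real p' q'
  rw [hp, hq, hpq] at e1
  linarith

theorem map_preserving_distances_to_simplex_is_isometry (n : ℕ)
    (x : Fin (n + 1) → EuclideanSpace ℝ (Fin n))
    (hx : AffineIndependent ℝ x)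
    (g : EuclideanSpace ℝ (Fin n) → EuclideanSpace ℝ (Fin n))
    (h1 : ∀ a : EuclideanSpace ℝ (Fin n), ∀ i, ‖g a - g (x i)‖ = ‖a - x i‖)
    (h2 : ∀ i j, ‖g (x i) - g (x j)‖ = ‖x i - x j‖) :
    Isometry g := by
  cases n with
  | zero =>
    haveI : Subsingleton (EuclideanSpace ℝ (Fin 0)) :=
      ⟨fun a b => PiLp.ext fun i => i.elim0⟩
    intro a b
    rw [Subsingleton.elim a b, Subsingleton.elim (g b) b]
  | succ n =>
  have keyA : ∀ (a : EuclideanSpace ℝ (Fin (n+1))) (i : Fin (n+1)),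
      ⟪g a - g (x 0), g (x i.succ) - g (x 0)⟫ = ⟪a - x 0, x i.succ - x 0⟫ := by
    intro a i
    apply inner_eq_of_norms (h1 a 0) (h2 i.succ 0)
    have e1 : g a - g (x 0) - (g (x i.succ) - g (x 0)) = g a - g (x i.succ) := by abel
    have e2 : a - x 0 - (x i.succ - x 0) = a - x i.succ := by abel
    rw [e1, e2]
    exact h1 a i.succ
  have keyB : ∀ i j : Fin (n+1), ⟪g (x i.succ) - g (x 0), g (x j.succ) - g (x 0)⟫ = ⟪x i.succ - x 0, x j.succ - x 0⟫ := fun i j => keyA (x i.succ) j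
  have hli : LinearIndependent ℝ (fun i : Fin (n+1) => x i.succ - x 0) := by
    have h := (affineIndependent_iff_linearIndependent_vsub ℝ x 0).mp hx
    have he : Function.Injective
        (fun i : Fin (n+1) => (⟨i.succ, Fin.succ_ne_zero i⟩ : {j : Fin (n+2) // j ≠ 0})) :=
      fun i j hij => Fin.succ_injective _ (congrArg Subtype.val hij)
    have h2' := h.comp _ he
    exact h2'
  have hcard : Fintype.card (Fin (n+1)) = Module.finrank ℝ (EuclideanSpace ℝ (Fin (n+1))) :=
    (Fintype.card_fin (n+1)).trans finrank_euclideanSpace_fin.symm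
  let B : Module.Basis (Fin (n+1)) ℝ (EuclideanSpace ℝ (Fin (n+1))) :=
    basisOfLinearIndependentOfCardEqFinrank hli hcard
  have hB : ∀ i, B i = x i.succ - x 0 := fun i =>
    congrFun (coe_basisOfLinearIndependentOfCardEqFinrank hli hcard) i
  let L : EuclideanSpace ℝ (Fin (n+1)) →ₗ[ℝ] EuclideanSpace ℝ (Fin (n+1)) := B.constr ℝ (fun i => g (x i.succ) - g (x 0))
  have hL : ∀ i, L (B i) = g (x i.succ) - g (x 0) := fun i => B.constr_basis ℝ _ i
  have stage1 : ∀ (j : Fin (n+1)) (b : EuclideanSpace ℝ (Fin (n+1))), ⟪L b, g (x j.succ) - g (x 0)⟫ = ⟪b, x j.succ - x 0⟫ := by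
    intro j b
    have heq : ((innerSL ℝ (g (x j.succ) - g (x 0))).toLinearMap).comp L = (innerSL ℝ (x j.succ - x 0)).toLinearMap := by
      apply B.ext
      intro i
      simp only [LinearMap.comp_apply, ContinuousLinearMap.coe_coe, innerSL_apply_apply]
      rw [hL i, hB i]
      exact (real_inner_comm _ _).trans ((keyB i j).trans (real_inner_comm _ _))
    have hb := congrArg (fun f => (f : EuclideanSpace ℝ (Fin (n+1)) →ₗ[ℝ] ℝ) b) heq
    simp only [LinearMap.comp_apply, ContinuousLinearMap.coe_coe, innerSL_apply_apply] at hb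
    exact (real_inner_comm _ _).trans (hb.trans (real_inner_comm _ _))
  have hinner : ∀ a b : EuclideanSpace ℝ (Fin (n+1)), ⟪L a, L b⟫ = ⟪a, b⟫ := by
    intro a b
    have heq : ((innerSL ℝ (L a)).toLinearMap).comp L = (innerSL ℝ a).toLinearMap := by
      apply B.ext
      intro j
      simp only [LinearMap.comp_apply, ContinuousLinearMap.coe_coe, innerSL_apply_apply]
      rw [hL j, hB j]
      exact stage1 j a
    have hb := congrArg (fun f => (f : EuclideanSpace ℝ (Fin (n+1)) →ₗ[ℝ] ℝ) b) heq
    simp only [LinearMap.comp_apply, ContinuousLinearMap.coe_coe, innerSL_apply_apply] at hb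
    exact hb
  have hnorm : ∀ a : EuclideanSpace ℝ (Fin (n+1)), ‖L a‖ = ‖a‖ := by
    intro a
    have h := hinner a a
    rw [real_inner_self_eq_norm_sq, real_inner_self_eq_norm_sq] at h
    nlinarith [norm_nonneg (L a), norm_nonneg a]
  have hsurj : Function.Surjective L := by
    apply LinearMap.surjective_of_injective
    intro a b hab
    have h0 : ‖a - b‖ = 0 := by rw [← hnorm, map_sub, hab, sub_self, norm_zero]
    exact sub_eq_zero.mp (norm_eq_zero.mp h0)
  have hU : ∀ a : EuclideanSpace ℝ (Fin (n+1)), g a - g (x 0) = L (a - x 0) := by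
    intro a
    have huL : ∀ c : EuclideanSpace ℝ (Fin (n+1)), ⟪g a - g (x 0), L c⟫ = ⟪a - x 0, c⟫ := by
      intro c
      have heq : ((innerSL ℝ (g a - g (x 0))).toLinearMap).comp L
          = (innerSL ℝ (a - x 0)).toLinearMap := by
        apply B.ext
        intro j
        simp only [LinearMap.comp_apply, ContinuousLinearMap.coe_coe, innerSL_apply_apply]
        rw [hL j, hB j]
        exact keyA a j
      have hb := congrArg (fun f => (f : EuclideanSpace ℝ (Fin (n+1)) →ₗ[ℝ] ℝ) c) heq
      simp only [LinearMap.comp_apply, ContinuousLinearMap.coe_coe, innerSL_apply_apply] at hb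
      exact hb
    obtain ⟨c, hc⟩ := hsurj (g a - g (x 0) - L (a - x 0))
    have hz : ⟪g a - g (x 0) - L (a - x 0), g a - g (x 0) - L (a - x 0)⟫ = 0 := by
      nth_rewrite 2 [← hc]
      rw [inner_sub_left, huL, hinner]
      ring
    exact sub_eq_zero.mp (inner_self_eq_zero.mp hz)
  apply Isometry.of_dist_eq
  intro a b
  rw [dist_eq_norm, dist_eq_norm]
  have e : g a - g b = (g a - g (x 0)) - (g b - g (x 0)) := by abel
  rw [e, hU a, hU b, ← map_sub, hnorm]
  congr 1
  abel
end

section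
/- Let C : [0,∞) → [0,∞) be given by C(r) = (rλ)² + Σ_{k=1}^{s} λ_k² (2 - 2cos(r κ_k)) with 0 < κ_1 < ⋯ < κ_s and λ_k > 0 for all k, and similarly C(r) = (rμ)² + Σ_{k=1}^{t} μ_k² (2 - 2cos(r ν_k)) with 0 < ν_1 < ⋯ < ν_t and μ_k > 0. Then s = t, κ_k = ν_k, λ_k = μ_k for all k, and λ = μ (assuming λ, μ ≥ 0). -/
/-!
Expanding `2 - 2 cos`, the identity says that `(λ² - μ²) r²` is a bounded trigonometric sum, so
`λ = μ`, and then `∑ λ_k² cos (κ_k r) - ∑ μ_k² cos (ν_k r)` is constant on `[0, ∞)`. The amplitude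
of a cosine sum at a frequency `ω₀ > 0` is twice the long-time mean `T⁻¹ ∫₀ᵀ f(r) cos (ω₀ r) dr`,
so both families have the same amplitude at every positive frequency. Since all amplitudes are
positive, the two sets of frequencies coincide, and monotonicity matches the two enumerations.
-/

open Real Filter Topology

theorem tendsto_integral_cos_mul_div_atTop (b : ℝ) :
    Tendsto (fun T => (∫ r in (0 : ℝ)..T, cos (b * r)) / T) atTop
      (𝓝 (if b = 0 then 1 else 0)) := by
  split_ifs with hb
  · subst hb
    refine tendsto_const_nhds.congr' ?_
    filter_upwards [eventually_gt_atTop 0] with T hT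
    simp [hT.ne']
  · have hint : ∀ T, ∫ r in (0 : ℝ)..T, cos (b * r) = sin (b * T) / b := fun T => by
      simp [intervalIntegral.integral_comp_mul_left (fun x => cos x) hb, integral_cos,
        div_eq_inv_mul]
    simp_rw [hint, div_eq_mul_inv (sin _ / b)]
    refine isBoundedUnder_le_mul_tendsto_zero ?_ tendsto_inv_atTop_zero
    refine isBoundedUnder_of_eventually_le (a := |b|⁻¹) (Eventually.of_forall fun T => ?_)
    rw [Function.comp_apply, norm_div, Real.norm_eq_abs, Real.norm_eq_abs, div_eq_mul_inv]
    exact mul_le_of_le_one_left (by positivity) (abs_sin_le_one _)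

theorem tendsto_integral_cos_mul_cos_div_atTop {ω ω₀ : ℝ} (hω : 0 ≤ ω) (hω₀ : 0 < ω₀) :
    Tendsto (fun T => (∫ r in (0 : ℝ)..T, cos (ω * r) * cos (ω₀ * r)) / T) atTop
      (𝓝 (if ω = ω₀ then 1 / 2 else 0)) := by
  have hprod : ∀ r, cos (ω * r) * cos (ω₀ * r) =
      (cos ((ω + ω₀) * r) + cos ((ω - ω₀) * r)) / 2 := fun r => by
    rw [add_mul, sub_mul, cos_add, cos_sub]; ring
  have hsplit : ∀ T, (∫ r in (0 : ℝ)..T, cos (ω * r) * cos (ω₀ * r)) / T =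
      ((∫ r in (0 : ℝ)..T, cos ((ω + ω₀) * r)) / T
        + (∫ r in (0 : ℝ)..T, cos ((ω - ω₀) * r)) / T) / 2 := fun T => by
    simp_rw [hprod]
    rw [intervalIntegral.integral_div, intervalIntegral.integral_add
      ((by fun_prop : Continuous _).intervalIntegrable _ _)
      ((by fun_prop : Continuous _).intervalIntegrable _ _)]
    ring
  simp_rw [hsplit]
  convert ((tendsto_integral_cos_mul_div_atTop _).add
    (tendsto_integral_cos_mul_div_atTop _)).div_const 2 using 2
  simp only [sub_eq_zero, (by positivity : ω + ω₀ ≠ 0), if_false]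
  split_ifs <;> norm_num

noncomputable section

variable {ι ι' : Type*} [Fintype ι] [Fintype ι']

def cosSum (a ω : ι → ℝ) (r : ℝ) : ℝ := ∑ i, a i * cos (ω i * r)

def cosCoeff (a ω : ι → ℝ) (ω₀ : ℝ) : ℝ := ∑ i, if ω i = ω₀ then a i else 0

@[fun_prop]
theorem continuous_cosSum (a ω : ι → ℝ) : Continuous (cosSum a ω) := by
  unfold cosSum; fun_prop

theorem abs_cosSum_le (a ω : ι → ℝ) (r : ℝ) : |cosSum a ω r| ≤ ∑ i, |a i| :=
  (Finset.abs_sum_le_sum_abs _ _).trans <| Finset.sum_le_sum fun i _ => by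
    rw [abs_mul]; exact mul_le_of_le_one_right (abs_nonneg _) (abs_cos_le_one _)

theorem cosCoeff_apply_of_injective {a ω : ι → ℝ} (hω : Function.Injective ω) (j : ι) :
    cosCoeff a ω (ω j) = a j := by
  classical
  simp only [cosCoeff, hω.eq_iff, Finset.sum_ite_eq', Finset.mem_univ, if_true]

theorem mem_range_of_cosCoeff_ne_zero {a ω : ι → ℝ} {ω₀ : ℝ} (h : cosCoeff a ω ω₀ ≠ 0) :
    ω₀ ∈ Set.range ω := by
  contrapose! h
  exact Finset.sum_eq_zero fun i _ => if_neg fun hi => h ⟨i, hi⟩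

theorem sum_mul_two_sub_two_cos (a ω : ι → ℝ) (r : ℝ) :
    ∑ k, a k * (2 - 2 * cos (r * ω k)) = 2 * ∑ k, a k - 2 * cosSum a ω r := by
  simp only [cosSum, Finset.mul_sum, ← Finset.sum_sub_distrib, mul_comm r]
  exact Finset.sum_congr rfl fun k _ => by ring

theorem tendsto_integral_cosSum_mul_cos_div_atTop {a ω : ι → ℝ} (hω : ∀ i, 0 ≤ ω i)
    {ω₀ : ℝ} (hω₀ : 0 < ω₀) :
    Tendsto (fun T => (∫ r in (0 : ℝ)..T, cosSum a ω r * cos (ω₀ * r)) / T) atTop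
      (𝓝 (cosCoeff a ω ω₀ / 2)) := by
  have hsum : ∀ T, (∫ r in (0 : ℝ)..T, cosSum a ω r * cos (ω₀ * r)) / T =
      ∑ i, a i * ((∫ r in (0 : ℝ)..T, cos (ω i * r) * cos (ω₀ * r)) / T) := fun T => by
    simp_rw [cosSum, Finset.sum_mul, mul_assoc]
    rw [intervalIntegral.integral_finsetSum fun i _ =>
      ((by fun_prop : Continuous _).intervalIntegrable _ _), Finset.sum_div]
    simp_rw [intervalIntegral.integral_const_mul, mul_div_assoc]
  have hlim : cosCoeff a ω ω₀ / 2 = ∑ i, a i * (if ω i = ω₀ then 1 / 2 else 0) := by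
    simp_rw [cosCoeff, Finset.sum_div, mul_ite]
    simp [div_eq_mul_inv]
  simp_rw [hsum, hlim]
  exact tendsto_finsetSum _ fun i _ =>
    (tendsto_integral_cos_mul_cos_div_atTop (hω i) hω₀).const_mul (a i)

theorem cosCoeff_eq_of_cosSum_sub_eq {a κ : ι → ℝ} {b ν : ι' → ℝ} {c : ℝ}
    (hκ : ∀ i, 0 ≤ κ i) (hν : ∀ j, 0 ≤ ν j)
    (h : ∀ r, 0 ≤ r → cosSum a κ r - cosSum b ν r = c) {ω₀ : ℝ} (hω₀ : 0 < ω₀) :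
    cosCoeff a κ ω₀ = cosCoeff b ν ω₀ := by
  have hdiff := (tendsto_integral_cosSum_mul_cos_div_atTop (a := a) hκ hω₀).sub
    (tendsto_integral_cosSum_mul_cos_div_atTop (a := b) hν hω₀)
  have hconst : Tendsto (fun T => (∫ r in (0 : ℝ)..T, c * cos (ω₀ * r)) / T) atTop (𝓝 0) := by
    simpa [intervalIntegral.integral_const_mul, mul_div_assoc, hω₀.ne'] using
      (tendsto_integral_cos_mul_div_atTop ω₀).const_mul c
  have heq : (fun T => (∫ r in (0 : ℝ)..T, c * cos (ω₀ * r)) / T) =ᶠ[atTop]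
      fun T => (∫ r in (0 : ℝ)..T, cosSum a κ r * cos (ω₀ * r)) / T
        - (∫ r in (0 : ℝ)..T, cosSum b ν r * cos (ω₀ * r)) / T := by
    filter_upwards [eventually_ge_atTop 0] with T hT
    rw [← sub_div, ← intervalIntegral.integral_sub
      ((by fun_prop : Continuous _).intervalIntegrable _ _)
      ((by fun_prop : Continuous _).intervalIntegrable _ _)]
    refine congrArg (· / T) (intervalIntegral.integral_congr fun r hr => ?_)
    rw [Set.uIcc_of_le hT] at hr
    simp only [← sub_mul, h r hr.1]
  have := tendsto_nhds_unique (hconst.congr' heq) hdiff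
  linarith

end

theorem Fin.exists_eq_cast_of_range_eq {α : Type*} [Preorder α] {s t : ℕ}
    {f : Fin s → α} {g : Fin t → α} (hf : StrictMono f) (hg : StrictMono g)
    (h : Set.range f = Set.range g) : ∃ e : s = t, ∀ k, f k = g (Fin.cast e k) := by
  have e : s = t := by
    simpa [Set.ncard_range_of_injective hf.injective,
      Set.ncard_range_of_injective hg.injective] using congrArg Set.ncard h
  subst e
  exact ⟨rfl, fun k => by rw [(hf.range_inj hg).1 h, Fin.cast_eq_self]⟩

theorem eq_zero_of_abs_mul_sq_le {a M : ℝ} (h : ∀ r, 0 ≤ r → |a * r ^ 2| ≤ M) : a = 0 := by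
  by_contra ha
  have ha' : 0 < |a| := abs_pos.2 ha
  have hr := h √((|M| + 1) / |a|) (Real.sqrt_nonneg _)
  rw [abs_mul, abs_of_nonneg (sq_nonneg (√((|M| + 1) / |a|))), Real.sq_sqrt (by positivity),
    mul_div_cancel₀ _ ha'.ne'] at hr
  linarith [le_abs_self M]

theorem uniqueness_of_coefficients (lam mu : ℝ) (hlam : 0 ≤ lam) (hmu : 0 ≤ mu)
    (s t : ℕ) (κ lamk : Fin s → ℝ) (ν muk : Fin t → ℝ)
    (hκmono : StrictMono κ) (hκpos : ∀ k, 0 < κ k) (hlamk : ∀ k, 0 < lamk k)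
    (hνmono : StrictMono ν) (hνpos : ∀ k, 0 < ν k) (hmuk : ∀ k, 0 < muk k)
    (hC : ∀ r : ℝ, 0 ≤ r →
      (r * lam) ^ 2 + ∑ k, (lamk k) ^ 2 * (2 - 2 * Real.cos (r * κ k)) =
      (r * mu) ^ 2 + ∑ k, (muk k) ^ 2 * (2 - 2 * Real.cos (r * ν k))) :
    ∃ e : s = t,
      (∀ k : Fin s, κ k = ν (Fin.cast e k) ∧ lamk k = muk (Fin.cast e k)) ∧
      lam = mu := by
  have hC' : ∀ r, 0 ≤ r → (lam ^ 2 - mu ^ 2) * r ^ 2 =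
      2 * (∑ k, muk k ^ 2 - ∑ k, lamk k ^ 2) +
        2 * (cosSum (lamk · ^ 2) κ r - cosSum (muk · ^ 2) ν r) := fun r hr => by
    have h := hC r hr
    rw [sum_mul_two_sub_two_cos (lamk · ^ 2), sum_mul_two_sub_two_cos (muk · ^ 2)] at h
    linear_combination h
  have hlm : lam = mu := by
    refine (sq_eq_sq₀ hlam hmu).1 (sub_eq_zero.1 (eq_zero_of_abs_mul_sq_le
      (M := 2 * |∑ k, muk k ^ 2 - ∑ k, lamk k ^ 2| + 2 * (∑ k, |lamk k ^ 2| + ∑ k, |muk k ^ 2|))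
      fun r hr => ?_))
    rw [hC' r hr]
    refine (abs_add_le _ _).trans ?_
    rw [abs_mul, abs_mul, abs_two]
    linarith [abs_sub (cosSum (lamk · ^ 2) κ r) (cosSum (muk · ^ 2) ν r),
      abs_cosSum_le (lamk · ^ 2) κ r, abs_cosSum_le (muk · ^ 2) ν r]
  subst hlm
  have hcoeff : ∀ ω₀, 0 < ω₀ → cosCoeff (lamk · ^ 2) κ ω₀ = cosCoeff (muk · ^ 2) ν ω₀ :=
    fun ω₀ => cosCoeff_eq_of_cosSum_sub_eq (c := ∑ k, lamk k ^ 2 - ∑ k, muk k ^ 2)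
      (fun k => (hκpos k).le) (fun k => (hνpos k).le)
      fun r hr => by linear_combination (-1 / 2 : ℝ) * hC' r hr
  have hrange : Set.range κ = Set.range ν := by
    refine Set.Subset.antisymm (Set.range_subset_iff.2 fun k => ?_)
      (Set.range_subset_iff.2 fun k => ?_)
    · refine mem_range_of_cosCoeff_ne_zero (a := (muk · ^ 2)) ?_
      rw [← hcoeff _ (hκpos k), cosCoeff_apply_of_injective hκmono.injective]
      exact (pow_pos (hlamk k) 2).ne'
    · refine mem_range_of_cosCoeff_ne_zero (a := (lamk · ^ 2)) ?_
      rw [hcoeff _ (hνpos k), cosCoeff_apply_of_injective hνmono.injective]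
      exact (pow_pos (hmuk k) 2).ne'
  obtain ⟨e, hκν⟩ := Fin.exists_eq_cast_of_range_eq hκmono hνmono hrange
  refine ⟨e, fun k => ⟨hκν k, ?_⟩, rfl⟩
  have hk := hcoeff (κ k) (hκpos k)
  rw [cosCoeff_apply_of_injective hκmono.injective, hκν k,
    cosCoeff_apply_of_injective hνmono.injective] at hk
  exact (sq_eq_sq₀ (hlamk k).le (hmuk _).le).1 hk
end

section
/- Let C(r) = (rλ)² + Σ_{k=1}^{s} λ_k² (2 - 2cos(r κ_k)) with 0 < κ_1 < ⋯ < κ_s and λ_k > 0. Then for n → ∞, C^{(4n+1)}(r) / (2 κ_s^{4n+1}) converges to λ_s² sin(r κ_s) for every r ∈ ℝ. -/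
open Real Filter Finset

private lemma hasDerivAt_sin_mul (a c r : ℝ) :
    HasDerivAt (fun x : ℝ => a * Real.sin (x * c)) (a * c * Real.cos (r * c)) r := by
  have h1 : HasDerivAt (fun x : ℝ => x * c) c r := hasDerivAt_mul_const c
  have h2 := (Real.hasDerivAt_sin (r * c)).comp r h1
  have h3 := h2.const_mul a
  refine h3.congr_deriv ?_
  ring

private lemma hasDerivAt_cos_mul (a c r : ℝ) :
    HasDerivAt (fun x : ℝ => a * Real.cos (x * c)) (-(a * c) * Real.sin (r * c)) r := by
  have h1 : HasDerivAt (fun x : ℝ => x * c) c r := hasDerivAt_mul_const c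
  have h2 := (Real.hasDerivAt_cos (r * c)).comp r h1
  have h3 := h2.const_mul a
  refine h3.congr_deriv ?_
  ring

private lemma deriv_sin_sum {N : ℕ} (κ a : Fin N → ℝ) :
    deriv (fun x : ℝ => ∑ k, a k * Real.sin (x * κ k))
      = fun r => ∑ k, (a k * κ k) * Real.cos (r * κ k) := by
  funext r
  exact (HasDerivAt.fun_sum fun k _ => hasDerivAt_sin_mul (a k) (κ k) r).deriv

private lemma deriv_cos_sum {N : ℕ} (κ a : Fin N → ℝ) :
    deriv (fun x : ℝ => ∑ k, a k * Real.cos (x * κ k))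
      = fun r => ∑ k, (-(a k * κ k)) * Real.sin (r * κ k) := by
  funext r
  exact (HasDerivAt.fun_sum fun k _ => hasDerivAt_cos_mul (a k) (κ k) r).deriv

private lemma step4 {N : ℕ} (κ : Fin N → ℝ) (C : ℝ → ℝ) (m : ℕ) (a : Fin N → ℝ)
    (h : iteratedDeriv m C = fun r => ∑ k, a k * Real.sin (r * κ k)) :
    iteratedDeriv (m + 4) C = fun r => ∑ k, (a k * κ k ^ 4) * Real.sin (r * κ k) := by
  rw [show m + 4 = m + 1 + 1 + 1 + 1 by ring, iteratedDeriv_succ, iteratedDeriv_succ,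
    iteratedDeriv_succ, iteratedDeriv_succ, h, deriv_sin_sum, deriv_cos_sum, deriv_sin_sum,
    deriv_cos_sum]
  funext r
  refine Finset.sum_congr rfl fun k _ => by ring

theorem derivative_limit (lam : ℝ) (s : ℕ) (κ lamk : Fin (s + 1) → ℝ)
    (hκmono : StrictMono κ) (hκpos : ∀ k, 0 < κ k) (hlamk : ∀ k, 0 < lamk k) :
    ∀ r : ℝ,
      Filter.Tendsto
        (fun n : ℕ =>
          iteratedDeriv (4 * n + 1)
            (fun r : ℝ =>
              (r * lam) ^ 2 + ∑ k, (lamk k) ^ 2 * (2 - 2 * Real.cos (r * κ k))) r /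
          (2 * (κ (Fin.last s)) ^ (4 * n + 1)))
        Filter.atTop
        (nhds ((lamk (Fin.last s)) ^ 2 * Real.sin (r * κ (Fin.last s)))) := by
  set C : ℝ → ℝ :=
    fun r : ℝ => (r * lam) ^ 2 + ∑ k, (lamk k) ^ 2 * (2 - 2 * Real.cos (r * κ k)) with hC
  have d1 : deriv C = fun r => 2 * lam ^ 2 * r + ∑ k, (2 * (lamk k) ^ 2 * κ k) * Real.sin (r * κ k) := by
    funext r
    have hpoly : HasDerivAt (fun x : ℝ => (x * lam) ^ 2) (2 * lam ^ 2 * r) r := by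
      have h1 : HasDerivAt (fun x : ℝ => x * lam) lam r := hasDerivAt_mul_const lam
      have h := h1.pow 2
      refine h.congr_deriv ?_
      push_cast
      ring
    have hterm : ∀ k, HasDerivAt (fun x : ℝ => (lamk k) ^ 2 * (2 - 2 * Real.cos (x * κ k)))
        ((2 * (lamk k) ^ 2 * κ k) * Real.sin (r * κ k)) r := by
      intro k
      have h := ((hasDerivAt_cos_mul 2 (κ k) r).const_sub 2).const_mul ((lamk k) ^ 2)
      refine h.congr_deriv ?_
      ring
    exact (hpoly.fun_add (HasDerivAt.fun_sum fun k _ => hterm k)).deriv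
  have d2 : iteratedDeriv 2 C
      = fun r => 2 * lam ^ 2 + ∑ k, (2 * (lamk k) ^ 2 * (κ k) ^ 2) * Real.cos (r * κ k) := by
    rw [iteratedDeriv_succ, iteratedDeriv_one, d1]
    funext r
    have hp : HasDerivAt (fun x : ℝ => 2 * lam ^ 2 * x) (2 * lam ^ 2) r := by
      simpa using (hasDerivAt_id r).const_mul (2 * lam ^ 2)
    have hs : HasDerivAt (fun x : ℝ => ∑ k, (2 * (lamk k) ^ 2 * κ k) * Real.sin (x * κ k))
        (∑ k, (2 * (lamk k) ^ 2 * κ k) * κ k * Real.cos (r * κ k)) r :=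
      HasDerivAt.fun_sum fun k _ => hasDerivAt_sin_mul (2 * (lamk k) ^ 2 * κ k) (κ k) r
    rw [(hp.fun_add hs).deriv]
    congr 1
    refine Finset.sum_congr rfl fun k _ => by ring
  have d3 : iteratedDeriv 3 C
      = fun r => ∑ k, (-(2 * (lamk k) ^ 2 * (κ k) ^ 3)) * Real.sin (r * κ k) := by
    rw [iteratedDeriv_succ, d2]
    funext r
    have hp : HasDerivAt (fun _ : ℝ => 2 * lam ^ 2) 0 r := hasDerivAt_const r _
    have hs : HasDerivAt (fun x : ℝ => ∑ k, (2 * (lamk k) ^ 2 * (κ k) ^ 2) * Real.cos (x * κ k))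
        (∑ k, -((2 * (lamk k) ^ 2 * (κ k) ^ 2) * κ k) * Real.sin (r * κ k)) r :=
      HasDerivAt.fun_sum fun k _ => hasDerivAt_cos_mul (2 * (lamk k) ^ 2 * (κ k) ^ 2) (κ k) r
    rw [(hp.fun_add hs).deriv, zero_add]
    refine Finset.sum_congr rfl fun k _ => by ring
  have d5 : iteratedDeriv 5 C
      = fun r => ∑ k, (2 * (lamk k) ^ 2 * (κ k) ^ 5) * Real.sin (r * κ k) := by
    rw [show (5 : ℕ) = 3 + 1 + 1 from rfl, iteratedDeriv_succ, iteratedDeriv_succ, d3,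
      deriv_sin_sum, deriv_cos_sum]
    funext r
    refine Finset.sum_congr rfl fun k _ => by ring
  have key : ∀ n : ℕ, iteratedDeriv (4 * n + 5) C
      = fun r => ∑ k, (2 * (lamk k) ^ 2 * (κ k) ^ (4 * n + 5)) * Real.sin (r * κ k) := by
    intro n
    induction n with
    | zero => simpa using d5
    | succ m ih =>
      rw [show 4 * (m + 1) + 5 = 4 * m + 5 + 4 by ring]
      rw [step4 κ C (4 * m + 5) _ ih]
      funext r
      refine Finset.sum_congr rfl fun k _ => ?_
      rw [pow_add]
      ring
  intro r
  have hκs : (0 : ℝ) < κ (Fin.last s) := hκpos _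
  set g : ℕ → ℝ := fun n =>
    ∑ k, (lamk k) ^ 2 * (κ k / κ (Fin.last s)) ^ (4 * n + 1) * Real.sin (r * κ k) with hg
  have hgt : Filter.Tendsto g Filter.atTop
      (nhds ((lamk (Fin.last s)) ^ 2 * Real.sin (r * κ (Fin.last s)))) := by
    have hsum : ((lamk (Fin.last s)) ^ 2 * Real.sin (r * κ (Fin.last s)))
        = ∑ k : Fin (s+1), (if k = Fin.last s then
            (lamk (Fin.last s)) ^ 2 * Real.sin (r * κ (Fin.last s)) else 0) := by
      simp
    rw [hsum]
    refine tendsto_finset_sum _ fun k _ => ?_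
    by_cases hk : k = Fin.last s
    · simp only [if_pos hk, hk, div_self (ne_of_gt hκs), one_pow, mul_one]
      exact tendsto_const_nhds
    · simp only [if_neg hk]
      have hlt : κ k < κ (Fin.last s) := hκmono ((Fin.le_last k).lt_of_ne hk)
      have hq0 : 0 ≤ κ k / κ (Fin.last s) := div_nonneg (hκpos k).le hκs.le
      have hq1 : κ k / κ (Fin.last s) < 1 := (div_lt_one hκs).mpr hlt
      have h0 : Filter.Tendsto (fun m : ℕ => (κ k / κ (Fin.last s)) ^ m)
          Filter.atTop (nhds 0) := tendsto_pow_atTop_nhds_zero_of_lt_one hq0 hq1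
      have h1 : Filter.Tendsto (fun n : ℕ => 4 * n + 1) Filter.atTop Filter.atTop :=
        Filter.tendsto_atTop_atTop_of_monotone (fun a b hab => by omega) (fun b => ⟨b, by omega⟩)
      have h2 := ((h0.comp h1).const_mul ((lamk k) ^ 2)).mul_const (Real.sin (r * κ k))
      simpa [Function.comp] using h2
  refine Filter.Tendsto.congr' ?_ hgt
  filter_upwards [eventually_ge_atTop 1] with n hn
  obtain ⟨m, rfl⟩ : ∃ m, n = m + 1 := ⟨n - 1, by omega⟩
  have hE : 4 * (m + 1) + 1 = 4 * m + 5 := by ring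
  rw [hg]
  simp only [hE, key m, Finset.sum_div]
  refine Finset.sum_congr rfl fun k _ => ?_
  rw [div_pow]
  have hne : κ (Fin.last s) ^ (4 * m + 5) ≠ 0 := pow_ne_zero _ (ne_of_gt hκs)
  field_simp
end

section
/- Let h : ℝ^m → ℝ^n with m > 1. If the restriction of h to every 2-dimensional affine plane E ⊆ ℝ^m is a similarity map, and h is distance equality preserving, then h itself is a similarity map. -/
/-!
Distance-equality preservation means `dist (h x) (h y)` depends only on `dist x y`. A single
plane already contains pairs of points at every distance, and on it `h` scales distances by a
fixed `lam`; so `h` scales every distance by `lam`.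
-/

open Module

theorem dist_eq_mul_of_preserves_dist_eq {X Y : Type*} [PseudoMetricSpace X] [PseudoMetricSpace Y]
    {h : X → Y} {S : Set X} {lam : ℝ}
    (hh : ∀ x y z w, dist x y = dist z w → dist (h x) (h y) = dist (h z) (h w))
    (hS : ∀ x ∈ S, ∀ y ∈ S, dist (h x) (h y) = lam * dist x y)
    (hS_dist : ∀ r, 0 ≤ r → ∃ u ∈ S, ∃ v ∈ S, dist u v = r) (x y : X) :
    dist (h x) (h y) = lam * dist x y := by
  obtain ⟨u, hu, v, hv, huv⟩ := hS_dist (dist x y) dist_nonneg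
  rw [hh x y u v huv.symm, hS u hu v hv, huv]

theorem AffineSubspace.exists_dist_eq_of_direction_ne_bot {V P : Type*} [NormedAddCommGroup V]
    [NormedSpace ℝ V] [MetricSpace P] [NormedAddTorsor V P] {E : AffineSubspace ℝ P}
    (hE : E.direction ≠ ⊥) {r : ℝ} (hr : 0 ≤ r) : ∃ u ∈ E, ∃ v ∈ E, dist u v = r := by
  obtain ⟨d, hd, hd0⟩ := Submodule.exists_mem_ne_zero_of_ne_bot hE
  obtain ⟨p, hp⟩ : (E : Set P).Nonempty := by
    rw [Set.nonempty_iff_ne_empty, Ne, AffineSubspace.coe_eq_bot_iff]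
    rintro rfl
    exact hE (AffineSubspace.direction_bot ℝ V P)
  refine ⟨(r / ‖d‖) • d +ᵥ p, E.vadd_mem_of_mem_direction (E.direction.smul_mem _ hd) hp, p, hp, ?_⟩
  rw [dist_vadd_left, norm_smul, Real.norm_of_nonneg (by positivity),
    div_mul_cancel₀ _ (norm_ne_zero_iff.mpr hd0)]

theorem Submodule.exists_finrank_eq {K V : Type*} [DivisionRing K] [AddCommGroup V] [Module K V]
    {n : ℕ} (hn : n ≤ finrank K V) : ∃ W : Submodule K V, finrank K W = n := by
  obtain ⟨f, hf⟩ := exists_linearIndependent_of_le_finrank hn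
  exact ⟨Submodule.span K (Set.range f), by simpa using finrank_span_eq_card hf⟩

theorem similarity_on_planes_implies_similarity (m n : ℕ) (hm : 1 < m)
    (h : EuclideanSpace ℝ (Fin m) → EuclideanSpace ℝ (Fin n))
    (hplane : ∀ E : AffineSubspace ℝ (EuclideanSpace ℝ (Fin m)),
      Module.finrank ℝ E.direction = 2 →
      ∃ lam : ℝ, 0 < lam ∧ ∀ x ∈ E, ∀ y ∈ E, ‖h x - h y‖ = lam * ‖x - y‖)
    (hh : ∀ x y z w, ‖x - y‖ = ‖z - w‖ → ‖h x - h y‖ = ‖h z - h w‖) :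
    ∃ lam : ℝ, 0 < lam ∧ ∀ x y, ‖h x - h y‖ = lam * ‖x - y‖ := by
  simp_rw [← dist_eq_norm] at hplane hh ⊢
  obtain ⟨W, hW⟩ : ∃ W : Submodule ℝ (EuclideanSpace ℝ (Fin m)), finrank ℝ W = 2 :=
    Submodule.exists_finrank_eq (by rw [finrank_euclideanSpace_fin]; exact hm)
  have hdir : W.toAffineSubspace.direction = W := W.toAffineSubspace_direction
  obtain ⟨lam, hlam, hsim⟩ := hplane W.toAffineSubspace (by rw [hdir, hW])
  have hW_ne_bot : W.toAffineSubspace.direction ≠ ⊥ := by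
    rw [hdir]
    rintro rfl
    simp at hW
  exact ⟨lam, hlam, dist_eq_mul_of_preserves_dist_eq hh hsim
    fun _ hr ↦ AffineSubspace.exists_dist_eq_of_direction_ne_bot hW_ne_bot hr⟩
end

section
/- Let h : ℝ → ℝ^n be a continuous distance equality preserving map. Then there exists a continuous one-parameter group f : ℝ → Isom(ℝ^n) of isometries and a point a ∈ ℝ^n with h(x) = f(x)(a) for all x ∈ ℝ. -/
open Submodule InnerProductSpace

section Aux

variable {E : Type*} [NormedAddCommGroup E] [InnerProductSpace ℝ E] [FiniteDimensional ℝ E]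

/-- Extension of an inner-product-preserving correspondence on a family to a linear
isometry of the whole space, fixing the orthogonal complement of the span. -/
lemma dep_extend (g u : ℝ → E)
    (hgu : ∀ x y : ℝ, ⟪u x, u y⟫_ℝ = ⟪g x, g y⟫_ℝ)
    (hu : ∀ x, u x ∈ span ℝ (Set.range g)) :
    ∃ T : E →ₗ[ℝ] E, (∀ x, T (g x) = u x) ∧
      (∀ v ∈ (span ℝ (Set.range g))ᗮ, T v = v) ∧ (∀ b, ‖T b‖ = ‖b‖) := by
  classical
  set V := span ℝ (Set.range g) with hVdef
  obtain ⟨c, hcsub, hcspan, hcli⟩ := exists_linearIndependent ℝ (Set.range g)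
  let bas : Module.Basis c ℝ V :=
    (Module.Basis.span hcli).map (LinearEquiv.ofEq _ _ (by rw [Subtype.range_coe]; exact hcspan))
  have hpick : ∀ i : c, ∃ x : ℝ, g x = (i : E) := fun i => hcsub i.2
  let pick : c → ℝ := fun i => (hpick i).choose
  have hpick' : ∀ i : c, g (pick i) = (i : E) := fun i => (hpick i).choose_spec
  let T₀ : V →ₗ[ℝ] E := bas.constr ℝ fun i => u (pick i)
  have hbas : ∀ i : c, ((bas i : E)) = g (pick i) := by
    intro i
    rw [hpick']
    simp [bas, Module.Basis.span_apply]
  have hT₀bas : ∀ i, T₀ (bas i) = u (pick i) := fun i => bas.constr_basis ℝ _ i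
  -- cross inner products
  have cross : ∀ (x : ℝ) (v : V), ⟪T₀ v, u x⟫_ℝ = ⟪(v : E), g x⟫_ℝ := by
    intro x v
    have : ((innerₛₗ ℝ (u x)).comp T₀ : V →ₗ[ℝ] ℝ) = (innerₛₗ ℝ (g x)).comp V.subtype := by
      apply bas.ext
      intro i
      simp only [LinearMap.comp_apply, innerₛₗ_apply_apply, hT₀bas, Submodule.subtype_apply]
      rw [hbas]
      exact hgu x (pick i)
    have h2 := congrArg (fun L => L v) this
    simp only [LinearMap.comp_apply, innerₛₗ_apply_apply, Submodule.subtype_apply] at h2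
    calc ⟪T₀ v, u x⟫_ℝ = ⟪u x, T₀ v⟫_ℝ := real_inner_comm _ _
      _ = ⟪g x, (v : E)⟫_ℝ := h2
      _ = ⟪(v : E), g x⟫_ℝ := real_inner_comm _ _
  have innerT : ∀ v w : V, ⟪T₀ v, T₀ w⟫_ℝ = ⟪(v : E), (w : E)⟫_ℝ := by
    intro v w
    have : ((innerₛₗ ℝ (T₀ v)).comp T₀ : V →ₗ[ℝ] ℝ) = (innerₛₗ ℝ ((v : E))).comp V.subtype := by
      apply bas.ext
      intro i
      simp only [LinearMap.comp_apply, innerₛₗ_apply_apply, hT₀bas, Submodule.subtype_apply]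
      rw [hbas]
      exact cross (pick i) v
    have h2 := congrArg (fun L => L w) this
    simpa only [LinearMap.comp_apply, innerₛₗ_apply_apply, Submodule.subtype_apply] using h2
  -- T₀ agrees with u on all generators
  have hT₀g : ∀ (x : ℝ) (hx : g x ∈ V), T₀ ⟨g x, hx⟩ = u x := by
    intro x hx
    have hz : ⟪T₀ ⟨g x, hx⟩ - u x, T₀ ⟨g x, hx⟩ - u x⟫_ℝ = 0 := by
      have e1 := innerT ⟨g x, hx⟩ ⟨g x, hx⟩
      have e2 := cross x ⟨g x, hx⟩
      have e3 := hgu x x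
      have e4 : ⟪u x, T₀ ⟨g x, hx⟩⟫_ℝ = ⟪(g x : E), g x⟫_ℝ := (real_inner_comm _ _).trans e2
      rw [inner_sub_sub_self]
      simp only at e1 e2 e4
      linarith
    have := inner_self_eq_zero.mp hz
    exact sub_eq_zero.mp this
  have hrange : ∀ v : V, T₀ v ∈ V := by
    intro v
    have h1 : T₀ v ∈ LinearMap.range T₀ := ⟨v, rfl⟩
    rw [Module.Basis.constr_range] at h1
    have h2 : span ℝ (Set.range fun i => u (pick i)) ≤ V := by
      rw [span_le]
      rintro _ ⟨i, rfl⟩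
      exact hu _
    exact h2 h1
  -- full map
  let P := orthogonalProjection V
  let T : E →ₗ[ℝ] E := T₀ ∘ₗ (P : E →ₗ[ℝ] V) + (LinearMap.id - V.subtype ∘ₗ (P : E →ₗ[ℝ] V))
  have hTapp : ∀ b, T b = T₀ (P b) + (b - (P b : E)) := fun b => rfl
  refine ⟨T, ?_, ?_, ?_⟩
  · intro x
    have hx : g x ∈ V := subset_span ⟨x, rfl⟩
    have hP : P (g x) = ⟨g x, hx⟩ := by
      apply Subtype.ext
      exact (Submodule.starProjection_eq_self_iff (K := V)).mpr hx
    rw [hTapp, hP, hT₀g x hx]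
    simp
  · intro v hv
    have hP : P v = 0 := Submodule.orthogonalProjectionOnto_apply_of_mem_orthogonal hv
    rw [hTapp, hP]
    simp
  · intro b
    have hmem1 : (T₀ (P b)) ∈ V := hrange _
    have hmem2 : b - (P b : E) ∈ Vᗮ := Submodule.sub_starProjection_mem_orthogonal (K := V) b
    have hc1 : ⟪T₀ (P b), b - (P b : E)⟫_ℝ = 0 :=
      (Submodule.mem_orthogonal V _).mp hmem2 _ hmem1
    have hc2 : ⟪(P b : E), b - (P b : E)⟫_ℝ = 0 :=
      (Submodule.mem_orthogonal V _).mp hmem2 _ (P b).2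
    have e1 : ‖T b‖ ^ 2 = ‖T₀ (P b)‖ ^ 2 + ‖b - (P b : E)‖ ^ 2 := by
      rw [hTapp, norm_add_sq_real, hc1]; ring
    have e2 : ‖b‖ ^ 2 = ‖(P b : E)‖ ^ 2 + ‖b - (P b : E)‖ ^ 2 := by
      conv_lhs => rw [← add_sub_cancel (P b : E) b]
      rw [norm_add_sq_real, hc2]; ring
    have e3 : ‖T₀ (P b)‖ ^ 2 = ‖(P b : E)‖ ^ 2 := by
      rw [← real_inner_self_eq_norm_sq, ← real_inner_self_eq_norm_sq, innerT]
    have e4 : ‖T b‖ ^ 2 = ‖b‖ ^ 2 := by rw [e1, e2, e3]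
    calc ‖T b‖ = Real.sqrt (‖T b‖ ^ 2) := (Real.sqrt_sq (norm_nonneg _)).symm
      _ = Real.sqrt (‖b‖ ^ 2) := by rw [e4]
      _ = ‖b‖ := Real.sqrt_sq (norm_nonneg _)

lemma dep_unique (g : ℝ → E) (A B : E →ₗ[ℝ] E)
    (h1 : ∀ x, A (g x) = B (g x))
    (h2 : ∀ v ∈ (span ℝ (Set.range g))ᗮ, A v = B v) : A = B := by
  set V := span ℝ (Set.range g)
  ext b
  have hb : b ∈ V ⊔ Vᗮ := by
    rw [Submodule.isCompl_orthogonal_of_hasOrthogonalProjection.sup_eq_top]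
    trivial
  obtain ⟨v, hv, w, hw, rfl⟩ := Submodule.mem_sup.mp hb
  have hspan : ∀ v ∈ V, A v = B v := by
    intro v hv
    induction hv using Submodule.span_induction with
    | mem x hx => obtain ⟨y, rfl⟩ := hx; exact h1 y
    | zero => simp
    | add x y hx hy ihx ihy => rw [map_add, map_add, ihx, ihy]
    | smul a x hx ih => rw [map_smul, map_smul, ih]
  rw [map_add, map_add, h2 w hw, hspan v hv]

end Aux

theorem continuous_dep_on_line_is_orbit_map (n : ℕ)
    (h : ℝ → EuclideanSpace ℝ (Fin n)) (hcont : Continuous h)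
    (hh : ∀ x y z w : ℝ, |x - y| = |z - w| → ‖h x - h y‖ = ‖h z - h w‖) :
    ∃ (f : ℝ → (EuclideanSpace ℝ (Fin n) ≃ᵢ EuclideanSpace ℝ (Fin n)))
      (a : EuclideanSpace ℝ (Fin n)),
      (∀ x y : ℝ, f (x + y) = f x * f y) ∧
      (∀ b : EuclideanSpace ℝ (Fin n), Continuous fun x => f x b) ∧
      ∀ x : ℝ, h x = f x a := by
  classical
  let g : ℝ → EuclideanSpace ℝ (Fin n) := fun x => h x - h 0
  set V := span ℝ (Set.range g) with hVdef
  have hshift : ∀ s x y : ℝ, ‖h (x + s) - h (y + s)‖ = ‖h x - h y‖ := by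
    intro s x y
    exact hh _ _ _ _ (by congr 1; ring)
  have hn1 : ∀ s x : ℝ, ‖h (x + s) - h s‖ = ‖g x‖ := by
    intro s x
    have := hshift s x 0
    rwa [zero_add] at this
  have hgsub : ∀ x y : ℝ, g x - g y = h x - h y := fun x y => sub_sub_sub_cancel_right _ _ _
  have hn2 : ∀ s x y : ℝ, ‖(h (x + s) - h s) - (h (y + s) - h s)‖ = ‖g x - g y‖ := by
    intro s x y
    rw [sub_sub_sub_cancel_right, hgsub, hshift]
  have hinner : ∀ s x y : ℝ, ⟪h (x + s) - h s, h (y + s) - h s⟫_ℝ = ⟪g x, g y⟫_ℝ := by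
    intro s x y
    have e1 := norm_sub_sq_real (h (x + s) - h s) (h (y + s) - h s)
    have e2 := norm_sub_sq_real (g x) (g y)
    rw [hn1, hn1, hn2] at e1
    linarith
  have hmem : ∀ x, g x ∈ V := fun x => subset_span ⟨x, rfl⟩
  have humem : ∀ s x : ℝ, h (x + s) - h s ∈ V := by
    intro s x
    have : h (x + s) - h s = g (x + s) - g s := (hgsub _ _).symm
    rw [this]
    exact sub_mem (hmem _) (hmem _)
  have hex : ∀ s : ℝ, ∃ T : EuclideanSpace ℝ (Fin n) →ₗ[ℝ] EuclideanSpace ℝ (Fin n),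
      (∀ x, T (g x) = h (x + s) - h s) ∧ (∀ v ∈ Vᗮ, T v = v) ∧ (∀ b, ‖T b‖ = ‖b‖) :=
    fun s => dep_extend g (fun x => h (x + s) - h s) (hinner s) (humem s)
  choose T hTg hTperp hTnorm using hex
  have huniq : ∀ (A B : EuclideanSpace ℝ (Fin n) →ₗ[ℝ] EuclideanSpace ℝ (Fin n)),
      (∀ x, A (g x) = B (g x)) → (∀ v ∈ Vᗮ, A v = B v) → A = B := dep_unique g
  have hT0 : T 0 = LinearMap.id := by
    apply huniq
    · intro x
      rw [hTg]
      simp [g]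
    · intro v hv
      rw [hTperp 0 v hv]
      rfl
  have hTadd : ∀ s t : ℝ, T s ∘ₗ T t = T (s + t) := by
    intro s t
    apply huniq
    · intro x
      have h1 : T t (g x) = g (x + t) - g t := by rw [hTg, hgsub]
      have h2 : x + t + s = x + (s + t) := by ring
      have h3 : t + s = s + t := by ring
      calc (T s ∘ₗ T t) (g x) = T s (g (x + t)) - T s (g t) := by
            rw [LinearMap.comp_apply, h1, map_sub]
        _ = (h (x + t + s) - h s) - (h (t + s) - h s) := by rw [hTg, hTg]
        _ = h (x + (s + t)) - h (s + t) := by rw [sub_sub_sub_cancel_right, h2, h3]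
        _ = T (s + t) (g x) := (hTg _ _).symm
    · intro v hv
      rw [LinearMap.comp_apply, hTperp t v hv, hTperp s v hv, hTperp (s + t) v hv]
  have hTinv : ∀ s : ℝ, ∀ b, T s (T (-s) b) = b := by
    intro s b
    have := hTadd s (-s)
    rw [add_neg_cancel, hT0] at this
    exact congrArg (fun L => L b) this
  have hTinv' : ∀ s : ℝ, ∀ b, T (-s) (T s b) = b := by
    intro s b
    have := hTadd (-s) s
    rw [neg_add_cancel, hT0] at this
    exact congrArg (fun L => L b) this
  let f : ℝ → (EuclideanSpace ℝ (Fin n) ≃ᵢ EuclideanSpace ℝ (Fin n)) := fun s =>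
    { toFun := fun b => h s + T s (b - h 0)
      invFun := fun b => h 0 + T (-s) (b - h s)
      left_inv := by
        intro b
        simp only [add_sub_cancel_left]
        rw [hTinv']
        simp
      right_inv := by
        intro b
        simp only [add_sub_cancel_left]
        rw [hTinv]
        simp
      isometry_toFun := by
        apply Isometry.of_dist_eq
        intro a b
        rw [dist_add_left, dist_eq_norm, dist_eq_norm, ← map_sub, sub_sub_sub_cancel_right,
          hTnorm] }
  have hfapp : ∀ s b, f s b = h s + T s (b - h 0) := fun s b => rfl
  refine ⟨f, h 0, ?_, ?_, ?_⟩
  · intro x y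
    apply IsometryEquiv.ext
    intro b
    have hmul : (f x * f y) b = f x (f y b) := rfl
    rw [hmul, hfapp, hfapp, hfapp]
    have e0 : h y + T y (b - h 0) - h 0 = (h y - h 0) + T y (b - h 0) := by abel
    rw [e0, map_add]
    have h1 : T x (h y - h 0) = h (y + x) - h x := hTg x y
    have h2 : T x (T y (b - h 0)) = T (x + y) (b - h 0) :=
      congrArg (fun L => L (b - h 0)) (hTadd x y)
    rw [h1, h2, show y + x = x + y from by ring]
    abel
  · intro b
    have hcl : ∀ v ∈ V, Continuous fun s => T s v := by
      intro v hv
      induction hv using Submodule.span_induction with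
      | mem x hx =>
        obtain ⟨y, rfl⟩ := hx
        have : (fun s => T s (g y)) = fun s => h (y + s) - h s := funext fun s => hTg s y
        rw [this]
        exact (hcont.comp ((continuous_const).add continuous_id)).sub hcont
      | zero => simpa using continuous_const
      | add u v hu hv ihu ihv => simp only [map_add]; exact ihu.add ihv
      | smul a u hu ih => simp only [map_smul]; exact ih.const_smul a
    set c := b - h 0 with hc
    have hdec : ∀ s, T s c = T s ((orthogonalProjection V c : EuclideanSpace ℝ (Fin n)))
        + (c - (orthogonalProjection V c : EuclideanSpace ℝ (Fin n))) := by
      intro s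
      conv_lhs => rw [← add_sub_cancel (orthogonalProjection V c : EuclideanSpace ℝ (Fin n)) c]
      rw [map_add, hTperp s (c - (orthogonalProjection V c : EuclideanSpace ℝ (Fin n)))
        (Submodule.sub_starProjection_mem_orthogonal (K := V) c)]
    have : (fun s => f s b) = fun s => h s +
        (T s ((orthogonalProjection V c : EuclideanSpace ℝ (Fin n)))
          + (c - (orthogonalProjection V c : EuclideanSpace ℝ (Fin n)))) := by
      funext s
      rw [hfapp, ← hc, hdec]
    rw [this]
    exact hcont.add ((hcl _ (orthogonalProjection V c).2).add continuous_const)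
  · intro x
    rw [hfapp, sub_self, map_zero, add_zero]
end

section
/- Let f : X → Isom(ℝ^n) be a map from a topological monoid X, constructed so that h(x) = f(x)(h(1)) for a map h : X → ℝ^n whose image affinely spans ℝ^n, where f(x) is determined by f(x)(h(x_i)) = h(x·x_i) for fixed affinely spanning points h(x_0),…,h(x_n). Then f is continuous (in the topology of pointwise convergence on Isom(ℝ^n)) if and only if h is continuous. -/
theorem f_continuous_iff_h_continuous {X M : Type*} [Monoid X] [TopologicalSpace X]
    [ContinuousMul X] (n : ℕ) (d : X × X → M)
    (hd : ∀ x y z : X, d (z * x, z * y) = d (x, y))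
    (h : X → EuclideanSpace ℝ (Fin n))
    (hh : ∀ x y z w : X, d (x, y) = d (z, w) → ‖h x - h y‖ = ‖h z - h w‖)
    (hspan : affineSpan ℝ (Set.range h) = ⊤)
    (f : X →* (EuclideanSpace ℝ (Fin n) ≃ᵢ EuclideanSpace ℝ (Fin n)))
    (hf : ∀ x : X, h x = f x (h 1)) :
    (∀ b : EuclideanSpace ℝ (Fin n), Continuous fun x => f x b) ↔ Continuous h := by
  constructor
  · intro hc
    have := hc (h 1)
    simpa [← hf] using this
  · intro hc b
    have hb : b ∈ affineSpan ℝ (Set.range h) := hspan ▸ AffineSubspace.mem_top ℝ _ b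
    obtain ⟨s, w, hw, rfl⟩ := eq_affineCombination_of_mem_affineSpan hb
    have key : ∀ x y : X, f x (h y) = h (x * y) := by
      intro x y
      rw [hf y, hf (x * y), map_mul]
      rfl
    have : (fun x => f x (s.affineCombination ℝ h w)) =
        fun x => ∑ y ∈ s, w y • h (x * y) := by
      funext x
      have := Finset.map_affineCombination s h w hw
        (f x).toRealAffineIsometryEquiv.toAffineIsometry.toAffineMap
      simp only [AffineIsometry.coe_toAffineMap, AffineIsometryEquiv.coe_toAffineIsometry,
        IsometryEquiv.coeFn_toRealAffineIsometryEquiv] at this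
      rw [this, Finset.affineCombination_eq_linear_combination _ _ _ hw]
      refine Finset.sum_congr rfl fun y _ => ?_
      simp [Function.comp, key]
    rw [this]
    exact continuous_finset_sum _ fun y _ =>
      ((hc.comp (continuous_mul_right y)).const_smul (w y))
end
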